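/- Let $a$, $b$, $c$ be integers with $1\le b\le a\le c$. Then $(-1)^{b(b+1)/2}\,P_b(a-2b-1,\,b+c+1)>0$. More precisely, for each $1\le j\le b$ every factor of the shifted factorial $(a-3b-c+2j-1)_j$ occurring in $P_b(a-2b-1,b+c+1)$ is negative (the largest such factor is $a-3b-c+3j-2\le a-c-2\le -2$), while all other factors of $P_b(a-2b-1,b+c+1)$ are positive, so the sign of $P_b(a-2b-1,b+c+1)$ is $(-1)^{b(b+1)/2}$. -/

import Mathlib

/-! The `j`-th factor of `P_n(x, y)` (for `j = 0, …, n-1`) has sign `(-1)^(j+1)`: its only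
factors that can be negative are those of `(x - y + 2j + 3)_(j+1)`, and they all are negative
once the largest of them, for `j = n - 1`, is; the remaining shifted factorial starts at
`x + 2y + 3j + 4 > 0`. Multiplying the signs gives `(-1)^(1 + 2 + ⋯ + n) = (-1)^(n(n+1)/2)`.
With `x = a - 2b - 1`, `y = b + c + 1` and `n = b`, the largest factor is `a - c - 2 < 0`. -/

/-- Factorial of an integer assumed nonnegative (via `Int.toNat`). -/
def ifact (m : ℤ) : ℚ := (m.toNat.factorial : ℚ)

/-- The shifted factorial (Pochhammer symbol) `(a)_k = a(a+1)⋯(a+k-1)`. -/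
def poch (a : ℤ) (k : ℕ) : ℤ := ∏ i ∈ Finset.range k, (a + i)

/-- The product side `P_n(x,y)` of the determinant evaluation (1.8). -/
def P (n : ℕ) (x y : ℤ) : ℚ :=
  ∏ j ∈ Finset.range n,
    ((Nat.factorial j : ℚ) * ifact (x + y + 2 * ((j : ℤ) + 1))
      * (poch (x - y + 2 * ((j : ℤ) + 1) + 1) (j + 1) : ℚ)
      * (poch (x + 2 * y + 3 * ((j : ℤ) + 1) + 1) (n - (j + 1)) : ℚ))
    / (ifact (x + (n : ℤ) + 2 * ((j : ℤ) + 1)) * ifact (y + (n : ℤ) - ((j : ℤ) + 1)))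

open Finset

lemma ifact_pos (m : ℤ) : 0 < ifact m := by
  unfold ifact
  exact_mod_cast m.toNat.factorial_pos

lemma poch_pos {a : ℤ} (ha : 0 < a) (k : ℕ) : 0 < poch a k :=
  prod_pos fun i _ => by positivity

lemma neg_one_pow_mul_poch_pos {a : ℤ} {k : ℕ} (h : a + k ≤ 0) : 0 < (-1) ^ k * poch a k := by
  have := prod_neg (s := range k) fun i : ℕ => a + i
  rw [card_range] at this
  rw [poch, ← this]
  exact prod_pos fun i hi => by
    have := mem_range.mp hi
    omega

lemma sum_range_id_add_one (n : ℕ) : ∑ j ∈ range n, (j + 1) = n * (n + 1) / 2 := by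
  have := sum_range_succ' (fun j => j) n
  simp only [add_zero] at this
  rw [← this, sum_range_id, Nat.add_sub_cancel, mul_comm]

lemma neg_one_pow_mul_prod_pos {R : Type*} [CommRing R] [LinearOrder R] [IsStrictOrderedRing R]
    {n : ℕ} {f : ℕ → R} (hf : ∀ j < n, 0 < (-1) ^ (j + 1) * f j) :
    0 < (-1) ^ (n * (n + 1) / 2) * ∏ j ∈ range n, f j := by
  have := prod_pos fun j hj => hf j (mem_range.mp hj)
  rwa [prod_mul_distrib, prod_pow_eq_pow_sum, sum_range_id_add_one] at this

theorem neg_one_pow_mul_P_pos {n : ℕ} {x y : ℤ} (hneg : x - y + 3 * n + 1 ≤ 0)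
    (hpos : 0 < x + 2 * y + 4) : 0 < (-1) ^ (n * (n + 1) / 2) * P n x y := by
  refine neg_one_pow_mul_prod_pos fun j hj => ?_
  have hsign : 0 < (-1 : ℚ) ^ (j + 1) * (poch (x - y + 2 * ((j : ℤ) + 1) + 1) (j + 1) : ℚ) := by
    exact_mod_cast neg_one_pow_mul_poch_pos (by push_cast; omega)
  have hrest : (0 : ℚ) < poch (x + 2 * y + 3 * ((j : ℤ) + 1) + 1) (n - (j + 1)) := by
    exact_mod_cast poch_pos (by omega) _
  have hfact : (0 : ℚ) < j.factorial := by exact_mod_cast j.factorial_pos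
  rw [mul_div_assoc']
  refine div_pos ?_ (mul_pos (ifact_pos _) (ifact_pos _))
  have := mul_pos (mul_pos (mul_pos hfact (ifact_pos (x + y + 2 * ((j : ℤ) + 1)))) hsign) hrest
  linarith

theorem sign_P_general (a b c : ℕ) (hac : a ≤ c) :
    (∀ j k : ℕ, 1 ≤ j → j ≤ b → k < j →
        (a : ℤ) - 3 * b - c + 2 * j - 1 + k < 0)
    ∧ (∀ j : ℕ, 1 ≤ j → j ≤ b →
        (a : ℤ) - 3 * b - c + 3 * j - 2 ≤ (a : ℤ) - c - 2 ∧ (a : ℤ) - c - 2 ≤ -2)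
    ∧ 0 < (-1 : ℚ) ^ (b * (b + 1) / 2) * P b ((a : ℤ) - 2 * b - 1) ((b : ℤ) + c + 1) :=
  ⟨fun j k _ hjb hkj => by omega, fun j _ hjb => ⟨by omega, by omega⟩,
    neg_one_pow_mul_P_pos (by omega) (by omega)⟩

/-- For `1 ≤ b ≤ a ≤ c`, every factor of the shifted factorial
`(a-3b-c+2j-1)_j` occurring in `P_b(a-2b-1, b+c+1)` is negative
(the largest being `a-3b-c+3j-2 ≤ a-c-2 ≤ -2`), so the sign of
`P_b(a-2b-1, b+c+1)` is `(-1)^(b(b+1)/2)`; in particular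
`(-1)^(b(b+1)/2) P_b(a-2b-1, b+c+1) > 0`. -/
theorem sign_P (a b c : ℕ) (hb : 1 ≤ b) (hba : b ≤ a) (hac : a ≤ c) :
    (∀ j k : ℕ, 1 ≤ j → j ≤ b → k < j →
        (a : ℤ) - 3 * b - c + 2 * j - 1 + k < 0)
    ∧ (∀ j : ℕ, 1 ≤ j → j ≤ b →
        (a : ℤ) - 3 * b - c + 3 * j - 2 ≤ (a : ℤ) - c - 2 ∧ (a : ℤ) - c - 2 ≤ -2)
    ∧ 0 < (-1 : ℚ) ^ (b * (b + 1) / 2) * P b ((a : ℤ) - 2 * b - 1) ((b : ℤ) + c + 1) :=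
  sign_P_general a b c hac
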